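/- arXiv:cond-mat/0511161 — 4 statements merged into one kernel-verified Lean document; each statement's English description precedes it below -/
import Mathlib

section
/- Let $\{\tilde x_k\}_{|k|\le M}$ be real numbers satisfying the recursion $\tilde x_{k+1} - 2\tilde x_k + \tilde x_{k-1} = 2\tilde x_k^3 + \tilde r_k$ with $|\tilde r_k| \le \varepsilon^3$ and $|\tilde x_k| \le \varepsilon_1$ for all $|k| \le M$. Then for any integer $M_1 > 2\varepsilon^{-1}/3$ and any $|k| \le M - 2M_1$, one has $|\tilde x_k| \le \max\{\varepsilon, (2M_1^{-2}\varepsilon_1)^{1/3}\}$. -/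
/-!
Suppose `|x k| > max ε b`, where `b = (2ε₁ / M₁²)^(1/3)`, and, replacing `x, r` by `-x, -r`,
that `x k = a > 0`. Wherever `x j ≥ a` the second difference is `2 x_j³ + r_j ≥ 2a³ - ε³ ≥ a³`.
Reflecting `j ↦ -j` if necessary, `x (k + 1) ≥ x k`, so along the next `2M₁` steps the sequence
stays above `a` and grows at least like `a³ i (i - 1) / 2`, reaching at least `a³ M₁²`, which
exceeds `2ε₁` by the choice of `b`. This contradicts `|x_j| ≤ ε₁`.
-/

theorem le_of_second_difference_ge (y : ℕ → ℝ) {a c : ℝ} (hc : 0 ≤ c) {n : ℕ}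
    (h₀ : a ≤ y 0) (h₁ : y 0 ≤ y 1)
    (hconv : ∀ i, i + 2 ≤ n → a ≤ y (i + 1) → c ≤ y (i + 2) - 2 * y (i + 1) + y i) :
    ∀ i ≤ n, a + c * (i * (i - 1) / 2) ≤ y i := by
  have key : ∀ i ≤ n, a + c * (i * (i - 1) / 2) ≤ y i ∧ (i + 1 ≤ n → i * c ≤ y (i + 1) - y i) := by
    intro i
    induction i with
    | zero => exact fun _ => ⟨by simpa using h₀, fun _ => by simpa using h₁⟩
    | succ i ih =>
      intro hi
      obtain ⟨hval, hslope⟩ := ih (by omega)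
      specialize hslope hi
      have hval' : a + c * (((i + 1 : ℕ) : ℝ) * ((i + 1 : ℕ) - 1) / 2) ≤ y (i + 1) := by
        push_cast
        nlinarith
      refine ⟨hval', fun hi₂ => ?_⟩
      have hai : a ≤ y (i + 1) := by
        have : 0 ≤ c * (i * (i + 1)) := by positivity
        linarith
      have := hconv i hi₂ hai
      push_cast
      linarith
  exact fun i hi => (key i hi).1

def CubicRecurrence (M : ℕ) (x r : ℤ → ℝ) : Prop :=
  ∀ k : ℤ, |k| < (M : ℤ) → x (k + 1) - 2 * x k + x (k - 1) = 2 * (x k) ^ 3 + r k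

namespace CubicRecurrence

variable {M : ℕ} {x r : ℤ → ℝ}

theorem neg (h : CubicRecurrence M x r) : CubicRecurrence M (fun j => -x j) (fun j => -r j) := by
  intro k hk
  linear_combination -h k hk

theorem comp_neg (h : CubicRecurrence M x r) :
    CubicRecurrence M (fun j => x (-j)) (fun j => r (-j)) := by
  intro k hk
  have := h (-k) (by simpa using hk)
  show x (-(k + 1)) - 2 * x (-k) + x (-(k - 1)) = 2 * x (-k) ^ 3 + r (-k)
  rw [show -(k + 1) = -k - 1 by ring, show -(k - 1) = -k + 1 by ring]
  linarith

theorem le_of_le_of_monotone_step (h : CubicRecurrence M x r) {a : ℝ} (ha : 0 ≤ a)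
    (hr : ∀ j : ℤ, |j| < (M : ℤ) → |r j| ≤ a ^ 3) {k : ℤ} {n : ℕ} (hk : |k| + n ≤ M)
    (hxk : a ≤ x k) (hstep : x k ≤ x (k + 1)) :
    a + a ^ 3 * (n * (n - 1) / 2) ≤ x (k + n) := by
  refine le_of_second_difference_ge (fun i => x (k + i)) (by positivity) (by simpa using hxk)
    (by simpa using hstep) (fun i hi hai => ?_) n le_rfl
  have hj : |k + (i + 1 : ℕ)| < (M : ℤ) := by
    have := abs_add_le k ((i + 1 : ℕ) : ℤ)
    rw [abs_of_nonneg (by positivity : (0 : ℤ) ≤ (i + 1 : ℕ))] at this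
    omega
  have hrec := h _ hj
  have hcube : a ^ 3 ≤ x (k + (i + 1 : ℕ)) ^ 3 := pow_le_pow_left₀ ha hai 3
  have hrj := (abs_le.mp (hr _ hj)).1
  simp only [Nat.cast_add, Nat.cast_ofNat, Nat.cast_one] at hrec hcube hrj ⊢
  rw [show k + (i + 2 : ℤ) = k + (i + 1) + 1 by ring, show (k + i : ℤ) = k + (i + 1) - 1 by ring]
  linarith

/-- The second difference at `k` is nonnegative, so the forward or the backward slope is;
in the second case reflect `j ↦ -j`. -/
theorem exists_le_of_le (h : CubicRecurrence M x r) {a : ℝ} (ha : 0 ≤ a)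
    (hr : ∀ j : ℤ, |j| < (M : ℤ) → |r j| ≤ a ^ 3) {k : ℤ} {n : ℕ} (hn : 0 < n)
    (hk : |k| + n ≤ M) (hxk : a ≤ x k) :
    ∃ j : ℤ, |j| ≤ M ∧ a + a ^ 3 * (n * (n - 1) / 2) ≤ x j := by
  rcases le_or_gt (x k) (x (k + 1)) with hstep | hstep
  · refine ⟨k + n, ?_, h.le_of_le_of_monotone_step ha hr hk hxk hstep⟩
    have := abs_add_le k n
    rw [abs_of_nonneg (by positivity : (0 : ℤ) ≤ n)] at this
    omega
  · have hkM : |k| < (M : ℤ) := by omega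
    have hstep' : x k ≤ x (k - 1) := by
      have := h k hkM
      have hcube : a ^ 3 ≤ x k ^ 3 := pow_le_pow_left₀ ha hxk 3
      have hrk := (abs_le.mp (hr k hkM)).1
      nlinarith [pow_nonneg ha 3]
    refine ⟨k - n, ?_, ?_⟩
    · have := abs_sub k n
      rw [abs_of_nonneg (by positivity : (0 : ℤ) ≤ n)] at this
      omega
    · have := h.comp_neg.le_of_le_of_monotone_step ha (fun j hj => hr (-j) (by simpa using hj))
        (k := -k) (by simpa using hk) (by simpa using hxk) (by
          show x (-(-k)) ≤ x (-(-k + 1))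
          rwa [neg_neg, neg_add, neg_neg, ← sub_eq_add_neg])
      simpa [sub_eq_add_neg, add_comm] using this

theorem exists_le_abs_of_le_abs (h : CubicRecurrence M x r) {a : ℝ} (ha : 0 ≤ a)
    (hr : ∀ j : ℤ, |j| < (M : ℤ) → |r j| ≤ a ^ 3) {k : ℤ} {n : ℕ} (hn : 0 < n)
    (hk : |k| + n ≤ M) (hxk : a ≤ |x k|) :
    ∃ j : ℤ, |j| ≤ M ∧ a + a ^ 3 * (n * (n - 1) / 2) ≤ |x j| := by
  rcases le_or_gt 0 (x k) with hpos | hneg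
  · obtain ⟨j, hj, hle⟩ := h.exists_le_of_le ha hr hn hk (by rwa [abs_of_nonneg hpos] at hxk)
    exact ⟨j, hj, hle.trans (le_abs_self _)⟩
  · obtain ⟨j, hj, hle⟩ := h.neg.exists_le_of_le ha (fun j hj => by simpa using hr j hj) hn hk
      (by rwa [abs_of_neg hneg] at hxk)
    exact ⟨j, hj, hle.trans (neg_le_abs _)⟩

end CubicRecurrence

theorem stmt_0_general (M M₁ : ℕ) (hM₁ : 0 < M₁)
    (ε ε₁ : ℝ) (hε : 0 < ε)
    (x r : ℤ → ℝ)
    (hrec : ∀ k : ℤ, |k| < (M : ℤ) →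
      x (k + 1) - 2 * x k + x (k - 1) = 2 * (x k) ^ 3 + r k)
    (hr : ∀ k : ℤ, |k| ≤ (M : ℤ) → |r k| ≤ ε ^ 3)
    (hx : ∀ k : ℤ, |k| ≤ (M : ℤ) → |x k| ≤ ε₁) :
    ∀ k : ℤ, |k| ≤ (M : ℤ) - 2 * (M₁ : ℤ) →
      |x k| ≤ max ε ((2 * ε₁ / (M₁ : ℝ) ^ 2) ^ ((1 : ℝ) / 3)) := by
  intro k hk
  by_contra! hlt
  set a := |x k|
  set b := (2 * ε₁ / (M₁ : ℝ) ^ 2) ^ ((1 : ℝ) / 3) with hb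
  have hεa : ε < a := (le_max_left _ _).trans_lt hlt
  have hba : b < a := (le_max_right _ _).trans_lt hlt
  have hra : ∀ j : ℤ, |j| < (M : ℤ) → |r j| ≤ a ^ 3 := fun j hj =>
    (hr j hj.le).trans (pow_le_pow_left₀ hε.le hεa.le 3)
  obtain ⟨j, hj, hgrowth⟩ := CubicRecurrence.exists_le_abs_of_le_abs hrec (hε.trans hεa).le hra
    (n := 2 * M₁) (by omega) (by push_cast; omega) le_rfl
  have hε₁ : 0 ≤ ε₁ := (abs_nonneg _).trans (hx k (by omega))
  have hM₁sq : (0 : ℝ) < (M₁ : ℝ) ^ 2 := by positivity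
  have hb3 : b ^ 3 = 2 * ε₁ / (M₁ : ℝ) ^ 2 := by
    rw [hb, one_div, show (3 : ℝ) = (3 : ℕ) by norm_num]
    exact Real.rpow_inv_natCast_pow (by positivity) three_ne_zero
  have hcube : 2 * ε₁ < a ^ 3 * (M₁ : ℝ) ^ 2 := by
    rw [← div_lt_iff₀ hM₁sq, ← hb3]
    exact pow_lt_pow_left₀ hba (by positivity) three_ne_zero
  have hbound : a ^ 3 * (M₁ : ℝ) ^ 2 ≤ ε₁ := by
    have hM₁one : (1 : ℝ) ≤ M₁ := by exact_mod_cast hM₁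
    push_cast at hgrowth
    nlinarith [hx j hj, mul_nonneg (pow_pos (hε.trans hεa) 3).le
      (mul_nonneg (by positivity : (0 : ℝ) ≤ M₁) (sub_nonneg.mpr hM₁one))]
  linarith

/-- Discrete nonlinear recursion bound (Proposition on `d²`, first part):
if `x_{k+1} - 2x_k + x_{k-1} = 2 x_k³ + r_k` with `|r_k| ≤ ε³` and `|x_k| ≤ ε₁`
for `|k| ≤ M`, then for `M₁ > 2/(3ε)` and `|k| ≤ M - 2M₁` one has
`|x_k| ≤ max {ε, (2 ε₁ / M₁²)^{1/3}}`. -/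
theorem stmt_0 (M M₁ : ℕ) (hM : 0 < M) (hM₁ : 0 < M₁)
    (ε ε₁ : ℝ) (hε : 0 < ε) (hε₁ : 0 < ε₁)
    (x r : ℤ → ℝ)
    (hrec : ∀ k : ℤ, |k| < (M : ℤ) →
      x (k + 1) - 2 * x k + x (k - 1) = 2 * (x k) ^ 3 + r k)
    (hr : ∀ k : ℤ, |k| ≤ (M : ℤ) → |r k| ≤ ε ^ 3)
    (hx : ∀ k : ℤ, |k| ≤ (M : ℤ) → |x k| ≤ ε₁)
    (hM₁ε : (M₁ : ℝ) > 2 * ε⁻¹ / 3) :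
    ∀ k : ℤ, |k| ≤ (M : ℤ) - 2 * (M₁ : ℤ) →
      |x k| ≤ max ε ((2 * ε₁ / (M₁ : ℝ) ^ 2) ^ ((1 : ℝ) / 3)) :=
  stmt_0_general M M₁ hM₁ ε ε₁ hε x r hrec hr hx
end

section
/- Let $\{\tilde x_k\}_{|k|\le M}$ satisfy $\tilde x_{k+1} - 2\tilde x_k + \tilde x_{k-1} = 2\tilde x_k^3 + \tilde r_k$ with $|\tilde r_k|\le \varepsilon^3$ and $|\tilde x_k|\le \varepsilon_1$. Then for any integer $M_1 > 2\varepsilon^{-1}/3$ and any $|k|\le M - 2M_1$, the first differences satisfy $|\tilde x_{k+1} - \tilde x_k| \le 4\max\{\varepsilon^2, (2M_1^{-2}\varepsilon_1)^{2/3}\}$. -/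
/-!
Put `A = max ε ((2 ε₁ / M₁²)^(1/3))`, so that `ε ≤ A` and `2 ε₁ ≤ A³ M₁²`. If `x_j > A` at
distance `M₁` from the ends, then `x` is discretely convex with second differences at least
`x³ ≥ A³` in the direction where it does not decrease, and after `M₁` steps it exceeds
`A³ M₁² / 2 ≥ ε₁`; applied to `x` and `-x` this gives `|x| ≤ A` on `|j| ≤ M - M₁`. There the
second differences are at most `3 A³`, and the discrete Landau inequality
`L |x_{k+1} - x_k| ≤ 2 A + L (L - 1) / 2 · 3 A³` with `L = ⌈2 / (3 A)⌉ ≤ M₁` gives `4 A²`.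
The escape argument needs `A² M₁ ≤ 2` or `M₁ ≥ 3`; otherwise `A ≥ 1`, and the third difference
`2 (x_{k+1}³ - x_k³) + 3 (x_{k+1} - x_k) = x_{k+2} - x_{k-1} - (r_{k+1} - r_k)` already
bounds `|x_{k+1} - x_k|³` by `12 A³ ≤ (4 A²)³`.
-/

section Escape

variable {u : ℕ → ℝ} {A : ℝ} {N : ℕ}

theorem growth_of_cube_le_second_diff (hA : 0 ≤ A) (h0 : A ≤ u 0) (h1 : u 0 ≤ u 1)
    (hΔ : ∀ i, i + 2 ≤ N → A ≤ u (i + 1) →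
      u (i + 1) ^ 3 ≤ u (i + 2) - 2 * u (i + 1) + u i) :
    ∀ n ≤ N, u 0 + n * (n - 1) / 2 * A ^ 3 ≤ u n ∧
      (n + 1 ≤ N → n * A ^ 3 ≤ u (n + 1) - u n) := by
  intro n
  induction n with
  | zero => exact fun _ => ⟨by simp, fun _ => by simpa using h1⟩
  | succ n ih =>
    intro hn
    obtain ⟨hpos, hdiff⟩ := ih (by omega)
    have hpos' : u 0 + (n + 1) * n / 2 * A ^ 3 ≤ u (n + 1) := by linarith [hdiff hn]
    have hAu : A ≤ u (n + 1) := by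
      have : 0 ≤ ((n : ℝ) + 1) * n / 2 * A ^ 3 := by positivity
      linarith
    push_cast
    refine ⟨by simpa using hpos', fun hn2 => ?_⟩
    have hcube : A ^ 3 ≤ u (n + 1) ^ 3 := pow_le_pow_left₀ hA hAu 3
    linarith [hdiff hn, hΔ n hn2 hAu]

theorem pow_three_mul_sq_div_two_lt (hA : 0 < A) (h0 : A < u 0) (h1 : u 0 ≤ u 1)
    (hΔ : ∀ i, i + 2 ≤ N → A ≤ u (i + 1) →
      u (i + 1) ^ 3 ≤ u (i + 2) - 2 * u (i + 1) + u i)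
    (hN : A ^ 2 * N ≤ 2 ∨ 3 ≤ N) :
    A ^ 3 * N ^ 2 / 2 < u N := by
  have hgrowth := growth_of_cube_le_second_diff hA.le h0.le h1 hΔ
  rcases hN with hsmall | hN
  · have hN := (hgrowth N le_rfl).1
    nlinarith [mul_le_mul_of_nonneg_left hsmall hA.le]
  · obtain ⟨n, rfl⟩ : ∃ n, N = n + 2 := ⟨N - 2, by omega⟩
    have hn : (1 : ℝ) ≤ n := by exact_mod_cast (by omega : 1 ≤ n)
    set w : ℝ := (n + 1) * n / 2 * A ^ 3 with hw
    have hw0 : 0 ≤ w := by positivity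
    have hpos : u 0 + w ≤ u (n + 1) := by simpa using (hgrowth (n + 1) (by omega)).1
    have hdiff : n * A ^ 3 ≤ u (n + 1) - u n := (hgrowth n (by omega)).2 (by omega)
    have hcube : A ^ 3 + 3 * A ^ 2 * w ≤ u (n + 1) ^ 3 :=
      calc A ^ 3 + 3 * A ^ 2 * w ≤ (A + w) ^ 3 := by
            nlinarith [mul_nonneg hA.le (mul_nonneg hw0 hw0), pow_nonneg hw0 3]
        _ ≤ u (n + 1) ^ 3 := pow_le_pow_left₀ (by positivity) (by linarith) 3
    have hlast := hΔ n le_rfl (by linarith)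
    -- the discriminant `(n + 2) ^ 2 - 24 n (n + 1)` of the quadratic in `A ^ 2` is negative
    have hquad : (n + 2) * A ^ 2 ≤ 2 + 3 * n * (n + 1) * A ^ 4 := by
      have hdisc : (n + 2) ^ 2 ≤ 24 * n * (n + 1) := by nlinarith
      refine le_of_mul_le_mul_left ?_ (by positivity : (0 : ℝ) < 12 * n * (n + 1))
      nlinarith [sq_nonneg (6 * n * (n + 1) * A ^ 2 - (n + 2))]
    have : (n + 2) * A ^ 3 ≤ 2 * A + 3 * n * (n + 1) * A ^ 5 := by
      nlinarith [mul_le_mul_of_nonneg_left hquad hA.le]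
    push_cast
    nlinarith

end Escape

section SupBound

variable {M : ℤ} {N : ℕ} {A ε ε₁ : ℝ}

theorem le_of_second_diff_ge_of_le_succ {v : ℤ → ℝ} (hε : 0 < ε) (hεA : ε ≤ A)
    (hN : A ^ 2 * N ≤ 2 ∨ 3 ≤ N) (hε₁ : 2 * ε₁ ≤ A ^ 3 * N ^ 2)
    (hrec : ∀ j, |j| < M → 2 * v j ^ 3 - ε ^ 3 ≤ v (j + 1) - 2 * v j + v (j - 1))
    (hv : ∀ j, |j| ≤ M → v j ≤ ε₁) {j : ℤ} (hj : |j| ≤ M - N) (hmono : v j ≤ v (j + 1)) :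
    v j ≤ A := by
  rw [abs_le] at hj
  by_contra! hlt
  have hescape := pow_three_mul_sq_div_two_lt (u := fun i => v (j + i)) (N := N)
    (hε.trans_le hεA) (by simpa using hlt) (by simpa using hmono) ?_ hN
  · have := hv (j + N) (by rw [abs_le]; omega)
    linarith
  · intro i hi hAi
    have hε3 : ε ^ 3 ≤ v (j + (i + 1 : ℕ)) ^ 3 := pow_le_pow_left₀ hε.le (hεA.trans hAi) 3
    have hi' : ((i + 2 : ℕ) : ℤ) ≤ N := by exact_mod_cast hi
    have hrecj := hrec (j + (i + 1 : ℕ)) (by rw [abs_lt]; push_cast at hi' ⊢; omega)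
    have e1 : j + ((i + 1 : ℕ) : ℤ) + 1 = j + ((i + 2 : ℕ) : ℤ) := by push_cast; ring
    have e2 : j + ((i + 1 : ℕ) : ℤ) - 1 = j + (i : ℤ) := by push_cast; ring
    rw [e1, e2] at hrecj
    linarith

theorem le_of_second_diff_ge {v : ℤ → ℝ} (hN₀ : 0 < N) (hε : 0 < ε) (hεA : ε ≤ A)
    (hN : A ^ 2 * N ≤ 2 ∨ 3 ≤ N) (hε₁ : 2 * ε₁ ≤ A ^ 3 * N ^ 2)
    (hrec : ∀ j, |j| < M → 2 * v j ^ 3 - ε ^ 3 ≤ v (j + 1) - 2 * v j + v (j - 1))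
    (hv : ∀ j, |j| ≤ M → v j ≤ ε₁) {j : ℤ} (hj : |j| ≤ M - N) :
    v j ≤ A := by
  rcases le_total (v j) (v (j + 1)) with hmono | hanti
  · exact le_of_second_diff_ge_of_le_succ hε hεA hN hε₁ hrec hv hj hmono
  by_contra! hlt
  have hrecj := hrec j (by omega)
  have hε3 : ε ^ 3 < v j ^ 3 := by gcongr; linarith
  have hmono : v j ≤ v (j - 1) := by linarith [pow_pos hε 3]
  -- the hypotheses are invariant under the reflection `j ↦ -j`
  have hrefl := le_of_second_diff_ge_of_le_succ (v := fun i => v (-i)) hε hεA hN hε₁ ?_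
    (fun i hi => hv (-i) (by rwa [abs_neg])) (j := -j) (by rwa [abs_neg])
    (by rwa [neg_neg, show -(-j + 1) = j - 1 by ring])
  · rw [neg_neg] at hrefl
    linarith
  · intro i hi
    have := hrec (-i) (by rwa [abs_neg])
    rw [show -(i + 1) = -i - 1 by ring, show -(i - 1) = -i + 1 by ring]
    linarith

theorem abs_le_of_recurrence {x r : ℤ → ℝ} (hN₀ : 0 < N) (hε : 0 < ε) (hεA : ε ≤ A)
    (hN : A ^ 2 * N ≤ 2 ∨ 3 ≤ N) (hε₁ : 2 * ε₁ ≤ A ^ 3 * N ^ 2)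
    (hrec : ∀ j, |j| < M → x (j + 1) - 2 * x j + x (j - 1) = 2 * x j ^ 3 + r j)
    (hr : ∀ j, |j| < M → |r j| ≤ ε ^ 3) (hx : ∀ j, |j| ≤ M → |x j| ≤ ε₁)
    {j : ℤ} (hj : |j| ≤ M - N) :
    |x j| ≤ A := by
  refine abs_le.mpr ⟨?_, ?_⟩
  · have := le_of_second_diff_ge (v := fun i => -x i) hN₀ hε hεA hN hε₁
      (fun i hi => by linarith [hrec i hi, (abs_le.mp (hr i hi)).2])
      (fun i hi => by linarith [(abs_le.mp (hx i hi)).1]) hj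
    linarith
  · exact le_of_second_diff_ge hN₀ hε hεA hN hε₁
      (fun i hi => by linarith [hrec i hi, (abs_le.mp (hr i hi)).1])
      (fun i hi => (abs_le.mp (hx i hi)).2) hj

end SupBound

theorem mul_abs_sub_le_of_abs_second_diff_le {u : ℕ → ℝ} {A C : ℝ} {L : ℕ}
    (hu : ∀ i ≤ L, |u i| ≤ A)
    (hΔ : ∀ i, i + 2 ≤ L → |u (i + 2) - 2 * u (i + 1) + u i| ≤ C) :
    L * |u 1 - u 0| ≤ 2 * A + L * (L - 1) / 2 * C := by
  have hdiff : ∀ j, j + 1 ≤ L → |u (j + 1) - u j - (u 1 - u 0)| ≤ j * C := by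
    intro j
    induction j with
    | zero => simp
    | succ j ih =>
      intro hj
      calc |u (j + 2) - u (j + 1) - (u 1 - u 0)|
          = |(u (j + 1) - u j - (u 1 - u 0)) + (u (j + 2) - 2 * u (j + 1) + u j)| := by ring_nf
        _ ≤ j * C + C := (abs_add_le _ _).trans (add_le_add (ih (by omega)) (hΔ j hj))
        _ = (j + 1 : ℕ) * C := by push_cast; ring
  have htaylor : ∀ n ≤ L, |u n - u 0 - n * (u 1 - u 0)| ≤ n * (n - 1) / 2 * C := by
    intro n
    induction n with
    | zero => simp
    | succ n ih =>
      intro hn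
      calc |u (n + 1) - u 0 - (n + 1 : ℕ) * (u 1 - u 0)|
          = |(u n - u 0 - n * (u 1 - u 0)) + (u (n + 1) - u n - (u 1 - u 0))| := by
            push_cast; ring_nf
        _ ≤ n * (n - 1) / 2 * C + n * C :=
            (abs_add_le _ _).trans (add_le_add (ih (by omega)) (hdiff n hn))
        _ = (n + 1 : ℕ) * ((n + 1 : ℕ) - 1) / 2 * C := by push_cast; ring
  calc (L : ℝ) * |u 1 - u 0| = |(u L - u 0) - (u L - u 0 - L * (u 1 - u 0))| := by
        rw [sub_sub_cancel, abs_mul, Nat.abs_cast]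
    _ ≤ (|u L| + |u 0|) + |u L - u 0 - L * (u 1 - u 0)| :=
        (abs_sub _ _).trans (add_le_add (abs_sub _ _) le_rfl)
    _ ≤ 2 * A + L * (L - 1) / 2 * C := by
        linarith [hu L le_rfl, hu 0 (Nat.zero_le _), htaylor L le_rfl]

theorem abs_sub_pow_three_le (a b : ℝ) :
    |a - b| ^ 3 ≤ 2 * |2 * (a ^ 3 - b ^ 3) + 3 * (a - b)| := by
  have hq : (a - b) ^ 2 ≤ 2 * (2 * (a ^ 2 + a * b + b ^ 2) + 3) := by
    nlinarith [sq_nonneg (a + b)]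
  have hq₀ : 0 ≤ 2 * (a ^ 2 + a * b + b ^ 2) + 3 := by nlinarith [sq_nonneg (a + b)]
  rw [show 2 * (a ^ 3 - b ^ 3) + 3 * (a - b) = (a - b) * (2 * (a ^ 2 + a * b + b ^ 2) + 3) by ring,
    abs_mul, abs_of_nonneg hq₀]
  calc |a - b| ^ 3 = |a - b| * (a - b) ^ 2 := by rw [← sq_abs (a - b)]; ring
    _ ≤ |a - b| * (2 * (2 * (a ^ 2 + a * b + b ^ 2) + 3)) :=
        mul_le_mul_of_nonneg_left hq (abs_nonneg _)
    _ = _ := by ring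

section FirstDifference

variable {M : ℤ} {A : ℝ} {x r : ℤ → ℝ}

theorem abs_sub_le_of_abs_le {N : ℕ} (hA : 0 < A) (hN : 2 / (3 * A) ≤ N)
    (hrec : ∀ j, |j| < M → x (j + 1) - 2 * x j + x (j - 1) = 2 * x j ^ 3 + r j)
    (hr : ∀ j, |j| < M → |r j| ≤ A ^ 3) (hx : ∀ j, |j| ≤ M - N → |x j| ≤ A)
    {k : ℤ} (hk : |k| ≤ M - 2 * N) :
    |x (k + 1) - x k| ≤ 4 * A ^ 2 := by
  -- the step `L ≈ 2 / (3 A)` balances the two terms of the interpolation bound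
  set L := ⌈2 / (3 * A)⌉₊ with hL
  have hLA : 2 ≤ L * (3 * A) := (div_le_iff₀ (by positivity)).mp (Nat.le_ceil _)
  have hLA' : (L - 1) * (3 * A) ≤ 2 := by
    have := Nat.ceil_lt_add_one (by positivity : 0 ≤ 2 / (3 * A))
    rw [← hL] at this
    exact (le_div_iff₀ (by positivity)).mp (by linarith)
  have hLN : (L : ℤ) ≤ N := by exact_mod_cast Nat.ceil_le.mpr hN
  have hL₀ : (0 : ℝ) < L := by nlinarith
  rw [abs_le] at hk
  have hinterp := mul_abs_sub_le_of_abs_second_diff_le (u := fun i => x (k + i)) (A := A)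
    (C := 3 * A ^ 3) (L := L) (fun i hi => hx _ ?_) ?_
  · simp only [Nat.cast_zero, add_zero, Nat.cast_one] at hinterp
    refine le_of_mul_le_mul_left ?_ hL₀
    nlinarith [mul_le_mul_of_nonneg_right hLA hA.le,
      mul_le_mul_of_nonneg_right hLA' (by positivity : 0 ≤ A ^ 2 * L / 2)]
  · have : (i : ℤ) ≤ L := by exact_mod_cast hi
    rw [abs_le]; omega
  · intro i hi
    have hi' : ((i + 2 : ℕ) : ℤ) ≤ L := by exact_mod_cast hi
    push_cast at hi'
    have hrec_i := hrec (k + (i + 1 : ℕ)) (by rw [abs_lt]; push_cast; omega)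
    have hxi : |x (k + (i + 1 : ℕ))| ≤ A := hx _ (by rw [abs_le]; push_cast; omega)
    have hri := hr (k + (i + 1 : ℕ)) (by rw [abs_lt]; push_cast; omega)
    have e1 : k + ((i + 1 : ℕ) : ℤ) + 1 = k + ((i + 2 : ℕ) : ℤ) := by push_cast; ring
    have e2 : k + ((i + 1 : ℕ) : ℤ) - 1 = k + (i : ℤ) := by push_cast; ring
    rw [e1, e2] at hrec_i
    rw [hrec_i]
    set y := x (k + (i + 1 : ℕ))
    calc |2 * y ^ 3 + r (k + (i + 1 : ℕ))|
        ≤ |2 * y ^ 3| + |r (k + (i + 1 : ℕ))| := abs_add_le _ _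
      _ = 2 * |y| ^ 3 + |r (k + (i + 1 : ℕ))| := by rw [abs_mul, abs_pow, abs_two]
      _ ≤ 3 * A ^ 3 := by linarith [pow_le_pow_left₀ (abs_nonneg y) hxi 3]

theorem abs_sub_le_of_one_le {ε₁ : ℝ} (hA : 1 ≤ A) (hε₁ : ε₁ ≤ 2 * A ^ 3)
    (hrec : ∀ j, |j| < M → x (j + 1) - 2 * x j + x (j - 1) = 2 * x j ^ 3 + r j)
    (hr : ∀ j, |j| ≤ M → |r j| ≤ A ^ 3) (hx : ∀ j, |j| ≤ M → |x j| ≤ ε₁)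
    {k : ℤ} (hk : |k| ≤ M - 2) :
    |x (k + 1) - x k| ≤ 4 * A ^ 2 := by
  rw [abs_le] at hk
  have hk₀ := hrec k (by rw [abs_lt]; omega)
  have hk₁ := hrec (k + 1) (by rw [abs_lt]; omega)
  rw [add_sub_cancel_right] at hk₁
  have hthird : 2 * (x (k + 1) ^ 3 - x k ^ 3) + 3 * (x (k + 1) - x k)
      = x (k + 1 + 1) - x (k - 1) - (r (k + 1) - r k) := by linarith
  have hbound : |x (k + 1 + 1) - x (k - 1) - (r (k + 1) - r k)| ≤ 2 * ε₁ + 2 * A ^ 3 := by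
    have := abs_sub (x (k + 1 + 1) - x (k - 1)) (r (k + 1) - r k)
    have := abs_sub (x (k + 1 + 1)) (x (k - 1))
    have := abs_sub (r (k + 1)) (r k)
    linarith [hx (k + 1 + 1) (by rw [abs_le]; omega), hx (k - 1) (by rw [abs_le]; omega),
      hr (k + 1) (by rw [abs_le]; omega), hr k (by rw [abs_le]; omega)]
  have hcube : |x (k + 1) - x k| ^ 3 ≤ (4 * A ^ 2) ^ 3 := by
    have := abs_sub_pow_three_le (x (k + 1)) (x k)
    rw [hthird] at this
    nlinarith [pow_le_pow_left₀ zero_le_one hA 3]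
  exact le_of_pow_le_pow_left₀ three_ne_zero (by positivity) hcube

end FirstDifference

theorem le_max_rpow_one_third_pow_three (ε : ℝ) {B : ℝ} (hB : 0 ≤ B) :
    B ≤ max ε (B ^ ((1 : ℝ) / 3)) ^ 3 := by
  calc B = (B ^ ((3 : ℕ)⁻¹ : ℝ)) ^ 3 := (Real.rpow_inv_natCast_pow hB three_ne_zero).symm
    _ ≤ max ε (B ^ ((1 : ℝ) / 3)) ^ 3 := by
        rw [Nat.cast_ofNat, inv_eq_one_div]
        exact pow_le_pow_left₀ (by positivity) (le_max_right _ _) 3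

theorem max_sq_rpow_two_thirds {ε B : ℝ} (hε : 0 ≤ ε) (hB : 0 ≤ B) :
    max (ε ^ 2) (B ^ ((2 : ℝ) / 3)) = max ε (B ^ ((1 : ℝ) / 3)) ^ 2 := by
  have h : B ^ ((2 : ℝ) / 3) = (B ^ ((1 : ℝ) / 3)) ^ 2 := by
    rw [← Real.rpow_natCast, ← Real.rpow_mul hB]; norm_num
  rw [h]
  exact ((pow_left_monotoneOn (n := 2)).map_max hε (Real.rpow_nonneg hB _)).symm

theorem stmt_1_general (M M₁ : ℕ) (hM₁ : 0 < M₁)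
    (ε ε₁ : ℝ) (hε : 0 < ε) (hε₁ : 0 < ε₁)
    (x r : ℤ → ℝ)
    (hrec : ∀ k : ℤ, |k| < (M : ℤ) →
      x (k + 1) - 2 * x k + x (k - 1) = 2 * (x k) ^ 3 + r k)
    (hr : ∀ k : ℤ, |k| ≤ (M : ℤ) → |r k| ≤ ε ^ 3)
    (hx : ∀ k : ℤ, |k| ≤ (M : ℤ) → |x k| ≤ ε₁)
    (hM₁ε : (M₁ : ℝ) > 2 * ε⁻¹ / 3) :
    ∀ k : ℤ, |k| ≤ (M : ℤ) - 2 * (M₁ : ℤ) →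
      |x (k + 1) - x k| ≤ 4 * max (ε ^ 2) ((2 * ε₁ / (M₁ : ℝ) ^ 2) ^ ((2 : ℝ) / 3)) := by
  intro k hk
  have hB : 0 ≤ 2 * ε₁ / (M₁ : ℝ) ^ 2 := by positivity
  rw [max_sq_rpow_two_thirds hε.le hB]
  set A := max ε ((2 * ε₁ / (M₁ : ℝ) ^ 2) ^ ((1 : ℝ) / 3))
  have hεA : ε ≤ A := le_max_left _ _
  have hA : 0 < A := hε.trans_le hεA
  have hε₁A : 2 * ε₁ ≤ A ^ 3 * M₁ ^ 2 :=
    (div_le_iff₀ (by positivity)).mp (le_max_rpow_one_third_pow_three ε hB)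
  have hrA : ∀ j : ℤ, |j| ≤ M → |r j| ≤ A ^ 3 :=
    fun j hj => (hr j hj).trans (pow_le_pow_left₀ hε.le hεA 3)
  by_cases hcase : A ^ 2 * M₁ ≤ 2 ∨ 3 ≤ M₁
  · have hstep : 2 / (3 * A) ≤ M₁ := calc
      2 / (3 * A) ≤ 2 / (3 * ε) := by gcongr
      _ = 2 * ε⁻¹ / 3 := by ring
      _ ≤ M₁ := hM₁ε.le
    exact abs_sub_le_of_abs_le hA hstep hrec (fun j hj => hrA j hj.le)
      (fun j hj => abs_le_of_recurrence hM₁ hε hεA hcase hε₁A hrec (fun i hi => hr i hi.le) hx hj)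
      hk
  · push Not at hcase
    have hM₁2 : (M₁ : ℝ) ≤ 2 := by exact_mod_cast (by omega : M₁ ≤ 2)
    have hA1 : 1 ≤ A := by nlinarith
    have hε₁A' : ε₁ ≤ 2 * A ^ 3 := by
      nlinarith [mul_le_mul_of_nonneg_left (by nlinarith : (M₁ : ℝ) ^ 2 ≤ 4) (pow_pos hA 3).le]
    exact abs_sub_le_of_one_le hA1 hε₁A' hrec hrA hx (by omega)

/-- Discrete nonlinear recursion bound (Proposition on `d²`, first part):
if `x_{k+1} - 2x_k + x_{k-1} = 2 x_k³ + r_k` with `|r_k| ≤ ε³` and `|x_k| ≤ ε₁`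
for `|k| ≤ M`, then for `M₁ > 2/(3ε)` and `|k| ≤ M - 2M₁` one has
`|x_k| ≤ max {ε, (2 ε₁ / M₁²)^{1/3}}`. -/
theorem stmt_1 (M M₁ : ℕ) (hM : 0 < M) (hM₁ : 0 < M₁)
    (ε ε₁ : ℝ) (hε : 0 < ε) (hε₁ : 0 < ε₁)
    (x r : ℤ → ℝ)
    (hrec : ∀ k : ℤ, |k| < (M : ℤ) →
      x (k + 1) - 2 * x k + x (k - 1) = 2 * (x k) ^ 3 + r k)
    (hr : ∀ k : ℤ, |k| ≤ (M : ℤ) → |r k| ≤ ε ^ 3)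
    (hx : ∀ k : ℤ, |k| ≤ (M : ℤ) → |x k| ≤ ε₁)
    (hM₁ε : (M₁ : ℝ) > 2 * ε⁻¹ / 3) :
    ∀ k : ℤ, |k| ≤ (M : ℤ) - 2 * (M₁ : ℤ) →
      |x (k + 1) - x k| ≤ 4 * max (ε ^ 2) ((2 * ε₁ / (M₁ : ℝ) ^ 2) ^ ((2 : ℝ) / 3)) :=
  stmt_1_general M M₁ hM₁ ε ε₁ hε hε₁ x r hrec hr hx hM₁ε
end

section
/- Let $q$ be the Hastings–McLeod solution of the Painlevé II equation $q''(x) = x q(x) + 2q(x)^3$, i.e. the unique solution with $q(x) \to 0$ as $x \to +\infty$ and $q(x)/\sqrt{-x} \to 1/\sqrt{2}$ as $x \to -\infty$ (normalization $2P_0(0)=1$). Then there exists $\delta > 0$ such that $6 q(x)^2 + x \ge \delta^2$ for all $x \in \mathbb{R}$. -/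
/-!
Put `w = 6 q² + x`. From `q(x)/√(-x) → 1/√2` one gets `w ≥ 1` near `-∞`, and trivially `w ≥ 1`
for `x ≥ 1`, so `w` attains a global minimum unless it is `≥ 1` everywhere. At a minimum `m`
with `w(m) ≤ 0` we would have `m < 0`, hence `q(m) > q(0) > Ai(0)`, and `w'(m) = 0` forces
`q'(m) = -1/(12 q(m))`; substituting this and `m ≤ -6 q(m)²` into Painlevé II gives
`q(m)² w''(m) ≤ 1/12 - 48 q(m)⁶ < 0` because `576 Ai(0)⁶ > 1`, contradicting minimality.
-/

open Set Filter Topology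

theorem IsLocalMin.deriv_deriv_nonneg {f : ℝ → ℝ} {x₀ : ℝ} (h : IsLocalMin f x₀)
    (hc : ContinuousAt f x₀) : 0 ≤ deriv (deriv f) x₀ := by
  by_contra! hneg
  have hmax : IsLocalMax f x₀ := isLocalMax_of_deriv_deriv_neg hneg h.deriv_eq_zero hc
  have hconst : f =ᶠ[𝓝 x₀] fun _ => f x₀ :=
    (h.and hmax).mono fun _ hx => le_antisymm hx.2 hx.1
  exact hneg.ne (by simpa using hconst.deriv.deriv_eq)

theorem exists_pos_le_of_isLocalMin_pos {f : ℝ → ℝ} (hf : Continuous f) {c : ℝ} (hc : 0 < c)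
    (hcocompact : ∀ᶠ x in cocompact ℝ, c ≤ f x) (hmin : ∀ m, IsLocalMin f m → 0 < f m) :
    ∃ ε > 0, ∀ x, ε ≤ f x := by
  by_cases hall : ∀ x, c ≤ f x
  · exact ⟨c, hc, hall⟩
  obtain ⟨x₀, hx₀⟩ := not_forall.1 hall
  obtain ⟨m, hm⟩ :=
    hf.exists_forall_le' x₀ (hcocompact.mono fun _ hx => (le_of_not_ge hx₀).trans hx)
  exact ⟨f m, hmin m (Eventually.of_forall hm), hm⟩

theorem deriv_deriv_neg_of_critical {u p m : ℝ} (hcrit : 12 * u * p + 1 = 0)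
    (hnonpos : 6 * u ^ 2 + m ≤ 0) (hu : 1 < 576 * u ^ 6) :
    12 * p ^ 2 + 12 * u * (m * u + 2 * u ^ 3) < 0 := by
  have hup : 144 * u ^ 2 * p ^ 2 = 1 := by nlinarith
  have hu0 : u ≠ 0 := by
    rintro rfl
    norm_num at hcrit
  have hu2 : 0 < u ^ 2 := by positivity
  nlinarith [mul_le_mul_of_nonneg_right hnonpos (pow_nonneg hu2.le 2)]

section HastingsMcLeod

variable {q : ℝ → ℝ}

theorem hasDerivAt_six_sq_add {q' x : ℝ} (hq : HasDerivAt q q' x) :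
    HasDerivAt (fun y => 6 * q y ^ 2 + y) (12 * q x * q' + 1) x := by
  refine (((hq.fun_pow 2).const_mul 6).fun_add (hasDerivAt_id' x)).congr_deriv ?_
  norm_num
  ring

theorem eventually_one_le_six_sq_add_atBot
    (hbot : Tendsto (fun x => q x / Real.sqrt (-x)) atBot (𝓝 (1 / Real.sqrt 2))) :
    ∀ᶠ x in atBot, 1 ≤ 6 * q x ^ 2 + x := by
  have hhalf : (1 : ℝ) / 2 < 1 / Real.sqrt 2 := by
    rw [one_div_lt_one_div two_pos (by positivity), Real.sqrt_lt' two_pos]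
    norm_num
  filter_upwards [hbot.eventually (eventually_gt_nhds hhalf), eventually_le_atBot (-2)]
    with x hx hx2
  have hs : 0 < Real.sqrt (-x) := Real.sqrt_pos.2 (by linarith)
  have hq : Real.sqrt (-x) / 2 < q x := by
    rw [lt_div_iff₀ hs] at hx
    linarith
  have hsq : Real.sqrt (-x) ^ 2 = -x := Real.sq_sqrt (by linarith)
  nlinarith [pow_lt_pow_left₀ hq (by positivity) two_ne_zero]

theorem six_sq_add_pos_of_isLocalMin
    (hq'' : ∀ x, deriv (deriv q) x = x * q x + 2 * q x ^ 3)
    (hdec : ∀ x, deriv q x < 0) (hq0 : q 0 > 0.355028) {m : ℝ}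
    (hm : IsLocalMin (fun x => 6 * q x ^ 2 + x) m) : 0 < 6 * q m ^ 2 + m := by
  by_contra! hnonpos
  have hq : ∀ x, HasDerivAt q (deriv q x) x := fun x =>
    (differentiableAt_of_deriv_ne_zero (hdec x).ne).hasDerivAt
  have hm0 : m < 0 := by
    rcases (show m ≤ 0 by nlinarith).lt_or_eq with h | rfl
    · exact h
    · nlinarith
  have hqm : 0.355028 < q m := hq0.trans (strictAnti_of_deriv_neg hdec hm0)
  have hq6 : 1 < 576 * q m ^ 6 := by
    have := pow_lt_pow_left₀ hqm (by norm_num) (n := 6) (by norm_num)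
    norm_num at this ⊢
    linarith
  have hq2 : HasDerivAt (deriv q) (m * q m + 2 * q m ^ 3) m := by
    have hne : deriv (deriv q) m ≠ 0 := by
      rw [hq'' m]
      nlinarith
    exact hq'' m ▸ (differentiableAt_of_deriv_ne_zero hne).hasDerivAt
  have hderiv : deriv (fun x => 6 * q x ^ 2 + x) = fun x => 12 * q x * deriv q x + 1 :=
    funext fun x => (hasDerivAt_six_sq_add (hq x)).deriv
  have hderiv2 : deriv (deriv (fun x => 6 * q x ^ 2 + x)) m
      = 12 * deriv q m ^ 2 + 12 * q m * (m * q m + 2 * q m ^ 3) := by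
    have h : HasDerivAt (fun x => 12 * q x * deriv q x + 1)
        (12 * deriv q m * deriv q m + 12 * q m * (m * q m + 2 * q m ^ 3)) m :=
      (((hq m).const_mul 12).mul hq2).add_const 1
    rw [hderiv, h.deriv]
    ring
  have hcrit : 12 * q m * deriv q m + 1 = 0 := by
    simpa [hderiv] using hm.deriv_eq_zero
  have := hm.deriv_deriv_nonneg (hasDerivAt_six_sq_add (hq m)).continuousAt
  rw [hderiv2] at this
  exact (deriv_deriv_neg_of_critical hcrit hnonpos hq6).not_ge this

end HastingsMcLeod

theorem stmt_4_general (q : ℝ → ℝ)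
    (hq'' : ∀ x, deriv (deriv q) x = x * q x + 2 * (q x) ^ 3)
    (hbot : Filter.Tendsto (fun x => q x / Real.sqrt (-x)) Filter.atBot
      (nhds (1 / Real.sqrt 2)))
    (hdec : ∀ x, deriv q x < 0)
    (hq0 : q 0 > 0.355028) :
    ∃ δ : ℝ, 0 < δ ∧ ∀ x : ℝ, 6 * (q x) ^ 2 + x ≥ δ ^ 2 := by
  have hq : Continuous q :=
    Differentiable.continuous fun x => differentiableAt_of_deriv_ne_zero (hdec x).ne
  have hcocompact : ∀ᶠ x in cocompact ℝ, 1 ≤ 6 * q x ^ 2 + x := by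
    rw [cocompact_eq_atBot_atTop, eventually_sup]
    exact ⟨eventually_one_le_six_sq_add_atBot hbot,
      (eventually_ge_atTop 1).mono fun x hx => by nlinarith [sq_nonneg (q x)]⟩
  obtain ⟨ε, hε, hle⟩ := exists_pos_le_of_isLocalMin_pos (by fun_prop) one_pos hcocompact
    fun m hm => six_sq_add_pos_of_isLocalMin hq'' hdec hq0 hm
  refine ⟨Real.sqrt ε, Real.sqrt_pos.2 hε, fun x => ?_⟩
  rw [Real.sq_sqrt hε.le]
  exact hle x

/-- Stability inequality for the Hastings–McLeod solution of Painlevé II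
(normalization `2P₀(0) = 1`): if `q'' = x q + 2q³`, `q → 0` at `+∞`,
`q(x)/√(-x) → 1/√2` at `-∞`, with `q > 0`, `q' < 0`, `q(0) > Ai(0) = 0.355028…`
and `q(x)² ≤ -x/2` for `x` sufficiently negative, then there is `δ > 0` with
`6 q(x)² + x ≥ δ²` for all `x`. -/
theorem stmt_4 (q : ℝ → ℝ)
    (hq'' : ∀ x, deriv (deriv q) x = x * q x + 2 * (q x) ^ 3)
    (htop : Filter.Tendsto q Filter.atTop (nhds 0))
    (hbot : Filter.Tendsto (fun x => q x / Real.sqrt (-x)) Filter.atBot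
      (nhds (1 / Real.sqrt 2)))
    (hpos : ∀ x, 0 < q x)
    (hdec : ∀ x, deriv q x < 0)
    (hq0 : q 0 > 0.355028)
    (hneg : ∃ X : ℝ, ∀ x ≤ X, (q x) ^ 2 ≤ -x / 2) :
    ∃ δ : ℝ, 0 < δ ∧ ∀ x : ℝ, 6 * (q x) ^ 2 + x ≥ δ ^ 2 :=
  stmt_4_general q hq'' hbot hdec hq0
end

section
/- Let $q:\mathbb{R}\to\mathbb{R}$ be a solution of $q'' = xq + 2q^3$ with $q > 0$ and $q' < 0$ on $\mathbb{R}$, and $q(0) > 3^{2/3}/6$. Define $f(x) = \sqrt{-x/6} - q(x)$ for $x < 0$. If $x_0 < 0$ is the largest negative root of $f$, then $x_0 < -3^{1/3}/2$, and moreover $f''(x) > 0$ for all $x \le x_0$ at which $q(x) \ge \sqrt{-x/6}$. -/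
open Filter Set Topology

/-!
Since `q` decreases, `√(-x₀/6) = q x₀ > q 0 > 3^{2/3}/6`, which is the bound on `x₀`. Where
`q ≤ √(-x/6)` and `x ≤ x₀`, the equation gives `q'' = q (x + 2q²) ≤ (2x/3) q ≤ (2x/3) q x₀`, and
the bound on `x₀` makes this smaller than `(√(-x/6))''`; so `f'' > 0` wherever `f ≥ 0` left of
`x₀`. Then `f` has no positive interior maximum on `[x, x₀]`, and `x₀` is no local maximum of `f`;
as `f < 0` right of `x₀`, this forces `f > 0` left of `x₀`, so the only point in question is `x₀`.
-/

theorem not_isLocalMax_of_deriv_deriv_pos {f : ℝ → ℝ} {c : ℝ} (hc : ContinuousAt f c)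
    (hf : 0 < deriv (deriv f) c) : ¬ IsLocalMax f c := by
  intro hmax
  have hmin : IsLocalMin f c := isLocalMin_of_deriv_deriv_pos hf hmax.deriv_eq_zero hc
  have hconst : f =ᶠ[𝓝 c] fun _ => f c :=
    (hmin.and hmax).mono fun _ hx => le_antisymm hx.2 hx.1
  refine hf.ne' ?_
  rw [hconst.deriv.deriv_eq]
  simp

theorem neg_of_forall_ne_zero {f : ℝ → ℝ} {a b x : ℝ} (hf : ContinuousOn f (Icc a b))
    (hb : f b < 0) (hne : ∀ y ∈ Icc a b, f y ≠ 0) (hx : x ∈ Icc a b) : f x < 0 := by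
  by_contra! hfx
  obtain ⟨c, hc, hfc⟩ :=
    intermediate_value_Icc' hx.2 (hf.mono (Icc_subset_Icc_left hx.1)) ⟨hb.le, hfx⟩
  exact hne c ⟨hx.1.trans hc.1, hc.2⟩ hfc

theorem pos_of_lt_of_deriv_deriv_pos {f : ℝ → ℝ} {x₀ b : ℝ} (hcont : Continuous f)
    (hroot : f x₀ = 0) (hb : x₀ < b) (hright : ∀ y ∈ Ioo x₀ b, f y < 0)
    (hconvex : ∀ y ≤ x₀, 0 ≤ f y → 0 < deriv (deriv f) y) {x : ℝ} (hx : x < x₀) : 0 < f x := by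
  by_contra! hfx
  obtain ⟨c, hc, hmax⟩ :=
    (isCompact_Icc (a := x) (b := x₀)).exists_isMaxOn (nonempty_Icc.2 hx.le) hcont.continuousOn
  rcases lt_or_ge 0 (f c) with hfc | hfc
  · have hcx : x < c := lt_of_le_of_ne hc.1 (by rintro rfl; linarith)
    have hcx₀ : c < x₀ := lt_of_le_of_ne hc.2 (by rintro rfl; linarith)
    exact not_isLocalMax_of_deriv_deriv_pos hcont.continuousAt (hconvex c hc.2 hfc.le)
      (hmax.isLocalMax (Icc_mem_nhds hcx hcx₀))
  · refine not_isLocalMax_of_deriv_deriv_pos hcont.continuousAt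
      (hconvex x₀ le_rfl hroot.ge) ?_
    filter_upwards [Ioo_mem_nhds hx hb] with y hy
    rw [hroot]
    rcases le_or_gt y x₀ with hyx₀ | hyx₀
    · exact (hmax ⟨hy.1.le, hyx₀⟩).trans hfc
    · exact (hright y ⟨hyx₀, hy.2⟩).le

theorem cbrt_three_sq : (3 : ℝ) ^ ((2 : ℝ) / 3) = (3 ^ ((1 : ℝ) / 3)) ^ 2 := by
  rw [← Real.rpow_natCast, ← Real.rpow_mul (by norm_num)]
  norm_num

theorem cbrt_three_cube : ((3 : ℝ) ^ ((1 : ℝ) / 3)) ^ 3 = 3 := by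
  rw [← Real.rpow_natCast, ← Real.rpow_mul (by norm_num)]
  norm_num

theorem lt_neg_cbrt_three_div_two {x : ℝ} (h : 3 ^ ((2 : ℝ) / 3) / 6 < √(-x / 6)) :
    x < -(3 ^ ((1 : ℝ) / 3)) / 2 := by
  have hc : 0 < (3 : ℝ) ^ ((1 : ℝ) / 3) := by positivity
  rw [cbrt_three_sq, Real.lt_sqrt (by positivity)] at h
  nlinarith [cbrt_three_cube]

theorem pow_three_lt_of_lt_neg_cbrt_three_div_two {x : ℝ} (h : x < -(3 ^ ((1 : ℝ) / 3)) / 2) :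
    x ^ 3 < -3 / 8 := by
  have hc : 0 < (3 : ℝ) ^ ((1 : ℝ) / 3) := by positivity
  have := pow_lt_pow_left₀ (show 3 ^ ((1 : ℝ) / 3) / 2 < -x by linarith) (by positivity)
    (three_ne_zero)
  rw [div_pow, cbrt_three_cube] at this
  linarith [show (-x) ^ 3 = -x ^ 3 by ring]

theorem hasDerivAt_sqrt_neg_div_six {x : ℝ} (hx : x < 0) :
    HasDerivAt (fun y => √(-y / 6)) (-1 / (12 * √(-x / 6))) x := by
  have h := ((hasDerivAt_neg x).div_const 6).sqrt (by linarith : -x / 6 ≠ 0)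
  convert h using 1
  field_simp
  ring

theorem hasDerivAt_neg_inv_sqrt_neg_div_six {x : ℝ} (hx : x < 0) :
    HasDerivAt (fun y => -1 / (12 * √(-y / 6))) (-1 / (144 * √(-x / 6) ^ 3)) x := by
  have hs : 0 < √(-x / 6) := Real.sqrt_pos.2 (by linarith)
  have h := (((hasDerivAt_sqrt_neg_div_six hx).const_mul 12).inv (by positivity)).neg
  refine (h.congr_deriv ?_).congr_of_eventuallyEq (.of_eq ?_)
  · field_simp
    ring
  · ext y
    simp only [Pi.neg_apply, Pi.inv_apply]
    ring

theorem painleve_rhs_lt_deriv_deriv_sqrt {x x₀ p : ℝ} (hx : x ≤ x₀) (hx₀ : x₀ ^ 3 < -3 / 8)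
    (hp : √(-x₀ / 6) ≤ p) (hps : p ≤ √(-x / 6)) :
    x * p + 2 * p ^ 3 < -1 / (144 * √(-x / 6) ^ 3) := by
  have hx₀neg : x₀ < 0 := by nlinarith [sq_nonneg x₀]
  set s := √(-x / 6)
  set s₀ := √(-x₀ / 6)
  have hs₀pos : 0 < s₀ := Real.sqrt_pos.2 (by linarith)
  have hs₀s : s₀ ≤ s := Real.sqrt_le_sqrt (by linarith)
  have hs₀sq : s₀ ^ 2 = -x₀ / 6 := Real.sq_sqrt (by linarith)
  have hssq : s ^ 2 = -x / 6 := Real.sq_sqrt (by linarith)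
  have hppos : 0 < p := hs₀pos.trans_le hp
  have hrhs : x * p + 2 * p ^ 3 ≤ 2 * x / 3 * s₀ := calc
    x * p + 2 * p ^ 3 = p * (x + 2 * p ^ 2) := by ring
    _ ≤ p * (x + 2 * s ^ 2) := by gcongr
    _ = 2 * x / 3 * p := by rw [hssq]; ring
    _ ≤ 2 * x / 3 * s₀ := by nlinarith
  have h16 : 1 < 16 * x ^ 2 * s₀ * s := calc
    (1 : ℝ) < 16 * x₀ ^ 2 * s₀ ^ 2 := by rw [hs₀sq]; nlinarith
    _ = 16 * x₀ ^ 2 * s₀ * s₀ := by ring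
    _ ≤ 16 * x ^ 2 * s₀ * s :=
      mul_le_mul (by nlinarith [sq_nonneg (x - x₀)]) hs₀s hs₀pos.le (by positivity)
  have hspos : 0 < s := hs₀pos.trans_le hs₀s
  have hgap : -1 / (144 * s ^ 3) - 2 * x / 3 * s₀ = (16 * x ^ 2 * s₀ * s - 1) / (144 * s ^ 3) := by
    rw [show s ^ 3 = -x / 6 * s by rw [pow_succ, hssq]]
    field_simp
    ring
  have : 0 < (16 * x ^ 2 * s₀ * s - 1) / (144 * s ^ 3) := div_pos (by linarith) (by positivity)
  linarith

theorem hasDerivAt_deriv_sqrt_neg_div_six_sub {q : ℝ → ℝ} (hq : Differentiable ℝ q) {x : ℝ}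
    (hx : x < 0) (hq' : DifferentiableAt ℝ (deriv q) x) :
    HasDerivAt (deriv fun y => √(-y / 6) - q y)
      (-1 / (144 * √(-x / 6) ^ 3) - deriv (deriv q) x) x := by
  refine ((hasDerivAt_neg_inv_sqrt_neg_div_six hx).sub hq'.hasDerivAt).congr_of_eventuallyEq ?_
  filter_upwards [Iio_mem_nhds hx] with y hy
  exact ((hasDerivAt_sqrt_neg_div_six hy).sub (hq y).hasDerivAt).deriv

theorem deriv_deriv_sqrt_neg_div_six_sub_pos {q : ℝ → ℝ}
    (hq'' : ∀ x, deriv (deriv q) x = x * q x + 2 * (q x) ^ 3) (hdec : ∀ x, deriv q x < 0)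
    {x₀ x : ℝ} (hx₀ : x₀ ^ 3 < -3 / 8) (hqx₀ : q x₀ = √(-x₀ / 6)) (hx : x ≤ x₀)
    (hqx : q x ≤ √(-x / 6)) : 0 < deriv (deriv fun y => √(-y / 6) - q y) x := by
  have hxneg : x < 0 := by nlinarith [sq_nonneg x₀]
  have hlt := painleve_rhs_lt_deriv_deriv_sqrt hx hx₀
    (hqx₀ ▸ (strictAnti_of_deriv_neg hdec).antitone hx) hqx
  rw [← hq''] at hlt
  have hs : 0 < √(-x / 6) := Real.sqrt_pos.2 (by linarith)
  have hneg : -1 / (144 * √(-x / 6) ^ 3) < 0 := div_neg_of_neg_of_pos (by norm_num) (by positivity)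
  rw [(hasDerivAt_deriv_sqrt_neg_div_six_sub
    (fun y => differentiableAt_of_deriv_ne_zero (hdec y).ne) hxneg
    (differentiableAt_of_deriv_ne_zero (by linarith))).deriv]
  linarith

theorem stmt_5_general (q : ℝ → ℝ)
    (hq'' : ∀ x, deriv (deriv q) x = x * q x + 2 * (q x) ^ 3)
    (hdec : ∀ x, deriv q x < 0)
    (hq0 : q 0 > 3 ^ ((2 : ℝ) / 3) / 6)
    (f : ℝ → ℝ) (hf : ∀ x, f x = Real.sqrt (-x / 6) - q x)
    (x₀ : ℝ) (hx₀neg : x₀ < 0) (hroot : f x₀ = 0)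
    (hlargest : ∀ x, x < 0 → f x = 0 → x ≤ x₀) :
    x₀ < -(3 ^ ((1 : ℝ) / 3)) / 2 ∧
      ∀ x ≤ x₀, q x ≥ Real.sqrt (-x / 6) → 0 < deriv (deriv f) x := by
  have hqx₀ : q x₀ = √(-x₀ / 6) := by linarith [hf x₀]
  have hbound : x₀ < -(3 ^ ((1 : ℝ) / 3)) / 2 :=
    lt_neg_cbrt_three_div_two (hqx₀ ▸ hq0.trans (strictAnti_of_deriv_neg hdec hx₀neg))
  have hfeq : f = fun y => √(-y / 6) - q y := funext hf
  have hconvex : ∀ y ≤ x₀, 0 ≤ f y → 0 < deriv (deriv f) y := fun y hy hfy =>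
    hfeq ▸ deriv_deriv_sqrt_neg_div_six_sub_pos hq'' hdec
      (pow_three_lt_of_lt_neg_cbrt_three_div_two hbound) hqx₀ hy (by linarith [hf y])
  have hcont : Continuous f := by
    have hq : Continuous q := continuous_iff_continuousAt.2 fun x =>
      (differentiableAt_of_deriv_ne_zero (hdec x).ne).continuousAt
    rw [hfeq]
    fun_prop
  have hq0pos : 0 < q 0 := lt_trans (by positivity) hq0
  have hright : ∀ y ∈ Ioo x₀ 0, f y < 0 := fun y hy =>
    neg_of_forall_ne_zero hcont.continuousOn (by simp [hf, hq0pos])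
      (fun z hz hfz => by
        rcases hz.2.eq_or_lt with rfl | hz0
        · simp [hf, hq0pos.ne'] at hfz
        · linarith [hlargest z hz0 hfz, hz.1, hy.1])
      ⟨le_rfl, hy.2.le⟩
  refine ⟨hbound, fun x hx hqx => ?_⟩
  obtain rfl : x = x₀ := by
    by_contra hne
    linarith [hf x, pos_of_lt_of_deriv_deriv_pos hcont hroot hx₀neg hright hconvex
      (lt_of_le_of_ne hx hne)]
  exact hconvex x le_rfl hroot.ge

/-- Comparison step for the Hastings–McLeod solution: with `q'' = xq + 2q³`,
`q > 0`, `q' < 0`, `q(0) > 3^{2/3}/6`, set `f(x) = √(-x/6) - q(x)`. If `x₀ < 0`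
is the largest negative root of `f`, then `x₀ < -3^{1/3}/2` and `f'' > 0` at
every `x ≤ x₀` where `q(x) ≥ √(-x/6)`. -/
theorem stmt_5 (q : ℝ → ℝ)
    (hq'' : ∀ x, deriv (deriv q) x = x * q x + 2 * (q x) ^ 3)
    (hpos : ∀ x, 0 < q x)
    (hdec : ∀ x, deriv q x < 0)
    (hq0 : q 0 > 3 ^ ((2 : ℝ) / 3) / 6)
    (f : ℝ → ℝ) (hf : ∀ x, f x = Real.sqrt (-x / 6) - q x)
    (x₀ : ℝ) (hx₀neg : x₀ < 0) (hroot : f x₀ = 0)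
    (hlargest : ∀ x, x < 0 → f x = 0 → x ≤ x₀) :
    x₀ < -(3 ^ ((1 : ℝ) / 3)) / 2 ∧
      ∀ x ≤ x₀, q x ≥ Real.sqrt (-x / 6) → 0 < deriv (deriv f) x :=
  stmt_5_general q hq'' hdec hq0 f hf x₀ hx₀neg hroot hlargest
end
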